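/- arXiv:math/0504251 — 3 statements merged into one kernel-verified Lean document; each statement's English description precedes it below -/
import Mathlib

section
/- Let g ≥ 1 and let F be the free group on the 2g generators a₁, b₁, …, a_g, b_g. Set w = [a₁,b₁]·[a₂,b₂]⋯[a_g,b_g], the product of the commutators [aᵢ,bᵢ] = aᵢbᵢaᵢ⁻¹bᵢ⁻¹. Then the cyclic subgroup ⟨w⟩ generated by w is root-closed in F: for every s ∈ F and every integer k ≥ 1 with s^k ∈ ⟨w⟩, already s ∈ ⟨w⟩. -/
/-!
Write `s = U R U⁻¹` with `R` the cyclic reduction of the reduced word of `s`. Then the reduced word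
of `s ^ k` is `U Rᵏ U⁻¹`, while the surface word `W` is cyclically reduced, so the reduced word of
`w ^ m` is `Wᵐ`. Since `Wᵐ` is cyclically reduced, `U` is empty and `Rᵏ = Wᵐ` letter by letter.
The letter `a₁` occurs exactly once in `W`; counting it gives `m = k c` with `c` the number of its
occurrences in `R`, so `R` and `Wᶜ` are prefixes of the same word of equal length, i.e. `s = wᶜ`.
-/

open scoped commutatorElement

open List

theorem List.eq_flatten_replicate_of_flatten_replicate_eq {β : Type*} [BEq β]
    {R W : List β} {x : β} (hx : W.count x = 1) {k m : ℕ} (hk : k ≠ 0)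
    (h : (replicate k R).flatten = (replicate m W).flatten) :
    R = (replicate (R.count x) W).flatten := by
  set c := R.count x
  have hm : m = k * c := by simpa [count_flatten, hx] using (congrArg (count x) h).symm
  have hlen : R.length = c * W.length := by
    have := congrArg length h
    simp only [length_flatten, map_replicate, sum_replicate, smul_eq_mul, hm, mul_assoc] at this
    exact Nat.eq_of_mul_eq_mul_left (Nat.pos_of_ne_zero hk) this
  obtain ⟨k, rfl⟩ := Nat.exists_eq_succ_of_ne_zero hk
  have hR : R <+: (replicate k.succ R).flatten := prefix_append _ _
  have hWc : (replicate c W).flatten <+: (replicate m W).flatten := by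
    rw [hm, Nat.succ_mul, add_comm, replicate_add, flatten_append]
    exact prefix_append _ _
  have hlen' : R.length = ((replicate c W).flatten).length := by simp [hlen]
  exact (prefix_of_prefix_length_le (h ▸ hR) hWc hlen'.le).eq_of_length hlen'

namespace FreeGroup

section

variable {α : Type*}

def commutatorWord (a b : α) : List (α × Bool) := [(a, true), (b, true), (a, false), (b, false)]

theorem mk_commutatorWord (a b : α) : mk (commutatorWord a b) = ⁅of a, of b⁆ := by
  simp [commutatorWord, commutatorElement_def, of, inv_mk, mul_mk, invRev]

theorem mk_flatten (Ls : List (List (α × Bool))) : mk Ls.flatten = (Ls.map mk).prod := by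
  induction Ls with
  | nil => rfl
  | cons L Ls ih => rw [flatten_cons, ← mul_mk, ih, map_cons, prod_cons]

theorem IsCyclicallyReduced.of_isChain_ne {L : List (α × Bool)}
    (h : L.IsChain fun a b => a.1 ≠ b.1) (hc : ∀ a ∈ L.getLast?, ∀ b ∈ L.head?, a.1 ≠ b.1) :
    IsCyclicallyReduced L :=
  ⟨h.imp fun _ _ hab hab' => absurd hab' hab, fun a ha b hb hab => absurd hab (hc a ha b hb)⟩

theorem not_isCyclicallyReduced_append_invRev {C L : List (α × Bool)} (hC : C ≠ []) :
    ¬ IsCyclicallyReduced (C ++ L ++ invRev C) := by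
  obtain ⟨a, C, rfl⟩ := exists_cons_of_ne_nil hC
  intro h
  have hlast : (a.1, !a.2) ∈ (a :: C ++ L ++ invRev (a :: C)).getLast? := by
    rw [invRev_cons, getLast?_append_of_ne_nil _ (by simp [invRev])]
    simp [invRev]
  simpa using h.2 _ hlast a (by simp)

end

section

variable {α : Type*} [DecidableEq α]

theorem toWord_pow_of_ne_zero (x : FreeGroup α) {k : ℕ} (hk : k ≠ 0) :
    (x ^ k).toWord = reduceCyclically.conjugator x.toWord ++
      (replicate k (reduceCyclically x.toWord)).flatten ++
      invRev (reduceCyclically.conjugator x.toWord) := by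
  rw [toWord_pow, reduceCyclically.reduce_flatten_replicate isReduced_toWord, if_neg hk]

theorem IsCyclicallyReduced.toWord_mk_pow {W : List (α × Bool)} (hW : IsCyclicallyReduced W)
    (m : ℕ) : (mk W ^ m).toWord = (replicate m W).flatten := by
  rw [pow_mk, toWord_mk, (hW.flatten_replicate m).isReduced.reduce_eq]

-- `count` is taken for an arbitrary `BEq` instance, to match the one it elaborates with on
-- concrete alphabets such as `(Fin g × Bool) × Bool`.
theorem IsCyclicallyReduced.mem_zpowers_of_pow_eq {W : List (α × Bool)}
    (hW : IsCyclicallyReduced W) [BEq (α × Bool)] {x : α × Bool} (hx : W.count x = 1)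
    {s : FreeGroup α} {k m : ℕ} (hk : k ≠ 0) (h : s ^ k = mk W ^ m) :
    s ∈ Subgroup.zpowers (mk W) := by
  set U := reduceCyclically.conjugator s.toWord
  set R := reduceCyclically s.toWord
  have hword : U ++ (replicate k R).flatten ++ invRev U = (replicate m W).flatten := by
    rw [← toWord_pow_of_ne_zero s hk, h, hW.toWord_mk_pow]
  have hU : U = [] := by
    by_contra hU
    exact not_isCyclicallyReduced_append_invRev hU (hword ▸ hW.flatten_replicate m)
  have hR : R = (replicate (R.count x) W).flatten :=
    eq_flatten_replicate_of_flatten_replicate_eq hx hk (by simpa [hU, invRev] using hword)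
  have hs : s = mk R := by
    rw [← mk_toWord (x := s), ← reduceCyclically.conj_conjugator_reduceCyclically s.toWord]
    change mk (U ++ R ++ invRev U) = _
    simp [hU, invRev]
  rw [hs, hR, ← pow_mk]
  exact Subgroup.npow_mem_zpowers _ _

theorem IsCyclicallyReduced.mem_zpowers_of_pow_mem_zpowers {W : List (α × Bool)}
    (hW : IsCyclicallyReduced W) [BEq (α × Bool)] {x : α × Bool} (hx : W.count x = 1)
    {s : FreeGroup α} {k : ℕ} (hk : k ≠ 0) (h : s ^ k ∈ Subgroup.zpowers (mk W)) :
    s ∈ Subgroup.zpowers (mk W) := by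
  obtain ⟨n, hn⟩ := Subgroup.mem_zpowers_iff.1 h
  obtain ⟨m, rfl | rfl⟩ := Int.eq_nat_or_neg n
  · exact hW.mem_zpowers_of_pow_eq hx hk (m := m) (by simpa using hn.symm)
  · rw [← Subgroup.inv_mem_iff]
    refine hW.mem_zpowers_of_pow_eq hx hk (m := m) ?_
    rw [inv_pow, ← hn, zpow_neg, inv_inv, zpow_natCast]

end

def surfaceWord (g : ℕ) : List ((Fin g × Bool) × Bool) :=
  (List.ofFn fun i : Fin g => commutatorWord (i, false) (i, true)).flatten

theorem mk_surfaceWord (g : ℕ) : mk (surfaceWord g) =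
    (List.ofFn fun i : Fin g => ⁅of (i, false), of (i, true)⁆).prod := by
  simp [surfaceWord, mk_flatten, map_ofFn, Function.comp_def, mk_commutatorWord]

theorem count_surfaceWord (g : ℕ) (i : Fin g) : (surfaceWord g).count ((i, false), true) = 1 := by
  simp [surfaceWord, count_flatten, map_ofFn, Function.comp_def, commutatorWord, sum_ofFn,
    count_cons]

theorem isCyclicallyReduced_surfaceWord (g : ℕ) : IsCyclicallyReduced (surfaceWord g) := by
  refine .of_isChain_ne ?_ ?_
  · rw [surfaceWord, isChain_flatten (by simp [commutatorWord, mem_ofFn])]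
    simp [commutatorWord, isChain_ofFn]
  · intro a ha b hb
    rw [surfaceWord, getLast?_flatten] at ha
    rw [surfaceWord, head?_flatten] at hb
    obtain ⟨la, hla, hal⟩ := exists_of_findSome?_eq_some ha
    obtain ⟨lb, hlb, hbl⟩ := exists_of_findSome?_eq_some hb
    obtain ⟨i, rfl⟩ := mem_ofFn.1 (mem_reverse.1 hla)
    obtain ⟨j, rfl⟩ := mem_ofFn.1 hlb
    simp only [commutatorWord, getLast?_cons_cons, getLast?_singleton, head?_cons,
      Option.some.injEq] at hal hbl
    simp [← hal, ← hbl]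

end FreeGroup

/-- The cyclic subgroup generated by the surface relator
`w = [a₁,b₁]⋯[a_g,b_g]` is root-closed in the free group on the `2g`
generators `a₁, b₁, …, a_g, b_g` (here indexed by `Fin g × Bool`, with
`(i, false)` playing the role of `aᵢ` and `(i, true)` the role of `bᵢ`). -/
theorem surface_relator_zpowers_rootClosed (g : ℕ) (hg : 1 ≤ g)
    (w : FreeGroup (Fin g × Bool))
    (hw : w = (List.ofFn fun i : Fin g =>
      ⁅FreeGroup.of (i, false), FreeGroup.of (i, true)⁆).prod)
    (s : FreeGroup (Fin g × Bool)) (k : ℤ) (hk : 1 ≤ k)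
    (h : s ^ k ∈ Subgroup.zpowers w) :
    s ∈ Subgroup.zpowers w := by
  rw [hw, ← FreeGroup.mk_surfaceWord] at h ⊢
  lift k to ℕ using by omega
  exact (FreeGroup.isCyclicallyReduced_surfaceWord g).mem_zpowers_of_pow_mem_zpowers
    (FreeGroup.count_surfaceWord g ⟨0, hg⟩) (k := k) (by omega) (by simpa using h)
end

section
/- Let α be a type and a ∈ α. In the free group FreeGroup α, the cyclic subgroup generated by the basis element FreeGroup.of a is root-closed: for every s ∈ FreeGroup α and every integer k ≥ 1 such that s^k is an integer power of FreeGroup.of a, s itself is an integer power of FreeGroup.of a. -/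
/-!
The powers of `of a` are exactly the elements whose reduced word uses only the letter `a`.
Writing the reduced word of `x` as `u ++ t ++ u⁻¹` with `t` cyclically reduced, the reduced
word of `x ^ n` (for `n ≠ 0`) is `u ++ t ^ n ++ u⁻¹`, so it contains every letter of `x`.
-/

namespace FreeGroup

variable {α : Type*}

theorem mk_mem_zpowers_of {a : α} {L : List (α × Bool)} (h : ∀ p ∈ L, p.1 = a) :
    mk L ∈ Subgroup.zpowers (of a) := by
  induction L with
  | nil => exact one_mem _
  | cons p L ih =>
    obtain ⟨b, sign⟩ := p
    obtain rfl : b = a := h _ List.mem_cons_self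
    rw [← List.singleton_append, ← mul_mk]
    refine mul_mem ?_ (ih fun p hp => h p (List.mem_cons_of_mem _ hp))
    cases sign
    · have : mk [(b, false)] = (of b)⁻¹ := by simp [of, inv_mk, invRev]
      exact this ▸ inv_mem (Subgroup.mem_zpowers _)
    · exact Subgroup.mem_zpowers _

variable [DecidableEq α]

theorem mem_zpowers_of_iff {a : α} {x : FreeGroup α} :
    x ∈ Subgroup.zpowers (of a) ↔ ∀ p ∈ x.toWord, p.1 = a := by
  refine ⟨?_, fun h => mk_toWord (x := x) ▸ mk_mem_zpowers_of h⟩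
  rintro ⟨m, rfl⟩
  obtain ⟨n, rfl | rfl⟩ := m.eq_nat_or_neg
  · simp [toWord_of_pow]
  · simp [toWord_inv, toWord_of_pow, invRev]

open reduceCyclically in
theorem toWord_subset_toWord_pow (x : FreeGroup α) {n : ℕ} (hn : n ≠ 0) :
    x.toWord ⊆ (x ^ n).toWord := by
  rw [toWord_pow, reduce_flatten_replicate isReduced_toWord, if_neg hn]
  nth_rw 1 [← conj_conjugator_reduceCyclically x.toWord]
  intro p
  simp [hn]

theorem pow_mem_zpowers_of_iff {a : α} {x : FreeGroup α} {n : ℕ} (hn : n ≠ 0) :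
    x ^ n ∈ Subgroup.zpowers (of a) ↔ x ∈ Subgroup.zpowers (of a) :=
  ⟨fun h => mem_zpowers_of_iff.2 fun p hp =>
    mem_zpowers_of_iff.1 h p (x.toWord_subset_toWord_pow hn hp), fun h => pow_mem h n⟩

end FreeGroup

/-- The cyclic subgroup generated by a basis element `FreeGroup.of a` is
root-closed in the free group `FreeGroup α`: if `s ^ k` is an integer power
of `FreeGroup.of a` for some integer `k ≥ 1`, then so is `s`. -/
theorem zpowers_of_basis_rootClosed {α : Type*} (a : α)
    (s : FreeGroup α) (k : ℤ) (hk : 1 ≤ k)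
    (h : ∃ m : ℤ, s ^ k = (FreeGroup.of a) ^ m) :
    ∃ m : ℤ, s = (FreeGroup.of a) ^ m := by
  classical
  lift k to ℕ using by omega
  obtain ⟨m, hm⟩ := h
  obtain ⟨m', hm'⟩ := (FreeGroup.pow_mem_zpowers_of_iff (n := k) (by omega)).1
    ⟨m, by simpa using hm.symm⟩
  exact ⟨m', hm'.symm⟩
end

section
/- In a free group FreeGroup α, if a^k = s^r for some integers k ≥ 1 and r ≥ 1, then a and s are powers of a common element: there exists c ∈ FreeGroup α and integers p, q with a = c^p and s = c^q (equivalently, a and s commute). -/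
/-!
The subgroup `H` generated by `a` and `s` is free by Nielsen–Schreier. A free group of rank at
least two maps onto `ℤ²`; the images of `a` and `s` would then span `ℤ²` while satisfying the
nontrivial linear relation `k • A = r • S`, which is impossible. So `H` has rank at most one, i.e.
it is cyclic, and its generator is the common root of `a` and `s`.
-/

theorem Subgroup.closure_image_eq_top_of_surjective {G H F : Type*} [Group G] [Group H]
    [FunLike F G H] [MonoidHomClass F G H] {f : F} (hf : Function.Surjective f) {s : Set G}
    (hs : closure s = ⊤) : closure (f '' s) = ⊤ := by
  rw [← MonoidHom.coe_coe f, ← MonoidHom.map_closure, hs, map_top_of_surjective _ hf]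

theorem Subgroup.closure_pair_subtype_eq_top {G : Type*} [Group G] (u v : G) :
    closure {(⟨u, subset_closure (by simp)⟩ : closure {u, v}), ⟨v, subset_closure (by simp)⟩} =
      ⊤ := by
  rw [← closure_closure_coe_preimage]
  congr 1
  ext ⟨x, hx⟩
  simp

theorem eq_zero_of_zsmul_eq_zsmul_of_spans {U V : ℤ × ℤ} {k r m n m' n' : ℤ}
    (h : k • U = r • V) (h₁ : m • U + n • V = (1, 0)) (h₂ : m' • U + n' • V = (0, 1)) :
    k = 0 := by
  simp only [Prod.ext_iff, Prod.smul_fst, Prod.smul_snd, Prod.fst_add, Prod.snd_add,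
    smul_eq_mul] at h h₁ h₂
  -- With `P = m r + n k` and `Q = m' r + n' k` one gets `P • V = (k, 0)` and `Q • V = (0, k)`,
  -- so `k * k = (P V.1) (Q V.2) - (P V.2) (Q V.1) = 0`.
  have : k * k = 0 := by grind
  simpa using this

theorem not_surjective_of_closure_pair_eq_top {G : Type*} [Group G] {u v : G}
    (hG : Subgroup.closure {u, v} = ⊤) {k r : ℤ} (hk : k ≠ 0) (h : u ^ k = v ^ r)
    (f : G →* Multiplicative (ℤ × ℤ)) : ¬ Function.Surjective f := by
  intro hf
  have hf' := Subgroup.closure_image_eq_top_of_surjective hf hG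
  rw [Set.image_pair] at hf'
  obtain ⟨m, n, h₁⟩ :=
    Subgroup.mem_closure_pair.mp (hf' ▸ Subgroup.mem_top (Multiplicative.ofAdd (1, 0)))
  obtain ⟨m', n', h₂⟩ :=
    Subgroup.mem_closure_pair.mp (hf' ▸ Subgroup.mem_top (Multiplicative.ofAdd (0, 1)))
  refine hk (eq_zero_of_zsmul_eq_zsmul_of_spans (r := r) (U := (f u).toAdd)
    (V := (f v).toAdd) ?_ (congrArg Multiplicative.toAdd h₁) (congrArg Multiplicative.toAdd h₂))
  simpa only [← toAdd_zpow, ← map_zpow] using congrArg (fun x => (f x).toAdd) h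

namespace FreeGroup

variable {ι : Type*}

theorem surjective_lift_of_ne [DecidableEq ι] {i j : ι} (hij : i ≠ j) :
    Function.Surjective (FreeGroup.lift fun l => Multiplicative.ofAdd
      ((if l = i then 1 else 0, if l = j then 1 else 0) : ℤ × ℤ)) := by
  intro x
  refine ⟨of i ^ x.toAdd.1 * of j ^ x.toAdd.2, Multiplicative.toAdd.injective ?_⟩
  simp [hij, hij.symm]

theorem subsingleton_of_closure_pair_eq_top {u v : FreeGroup ι}
    (hG : Subgroup.closure {u, v} = ⊤) {k r : ℤ} (hk : k ≠ 0) (h : u ^ k = v ^ r) :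
    Subsingleton ι := by
  classical
  by_contra hι
  obtain ⟨i, j, hij⟩ := not_subsingleton_iff_nontrivial.mp hι
  exact not_surjective_of_closure_pair_eq_top hG hk h _ (surjective_lift_of_ne hij)

theorem isCyclic_of_subsingleton [Subsingleton ι] : IsCyclic (FreeGroup ι) := by
  obtain ⟨g, hg⟩ : ∃ g : FreeGroup ι, Set.range of ⊆ {g} := by
    rcases isEmpty_or_nonempty ι with hι | ⟨⟨i⟩⟩
    · exact ⟨1, by simp [Set.range_eq_empty]⟩
    · exact ⟨of i, by rintro _ ⟨j, rfl⟩; rw [Subsingleton.elim j i]; rfl⟩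
  refine isCyclic_iff_exists_zpowers_eq_top.mpr ⟨g, top_le_iff.mp ?_⟩
  rw [← closure_range_of, Subgroup.zpowers_eq_closure]
  exact Subgroup.closure_mono hg

end FreeGroup

namespace IsFreeGroup

variable {G : Type*} [Group G] [IsFreeGroup G]

theorem isCyclic_of_closure_pair_eq_top {u v : G} (hG : Subgroup.closure {u, v} = ⊤)
    {k r : ℤ} (hk : k ≠ 0) (h : u ^ k = v ^ r) : IsCyclic G := by
  obtain ⟨ι, ⟨b⟩⟩ := IsFreeGroup.nonempty_basis (G := G)
  have hb := Subgroup.closure_image_eq_top_of_surjective b.repr.surjective hG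
  rw [Set.image_pair] at hb
  have : Subsingleton ι :=
    FreeGroup.subsingleton_of_closure_pair_eq_top hb hk (by rw [← map_zpow, ← map_zpow, h])
  have := FreeGroup.isCyclic_of_subsingleton (ι := ι)
  exact isCyclic_of_surjective b.repr.symm b.repr.symm.surjective

theorem exists_zpow_eq_and_zpow_eq_of_zpow_eq_zpow {u v : G} {k r : ℤ} (hk : k ≠ 0)
    (h : u ^ k = v ^ r) : ∃ (c : G) (p q : ℤ), u = c ^ p ∧ v = c ^ q := by
  have : IsCyclic (Subgroup.closure {u, v}) :=
    isCyclic_of_closure_pair_eq_top (Subgroup.closure_pair_subtype_eq_top u v) hk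
      (Subtype.ext h)
  obtain ⟨c, hc⟩ := exists_zpow_surjective (Subgroup.closure {u, v})
  obtain ⟨p, hp⟩ := hc ⟨u, Subgroup.subset_closure (by simp)⟩
  obtain ⟨q, hq⟩ := hc ⟨v, Subgroup.subset_closure (by simp)⟩
  exact ⟨c, p, q, congrArg Subtype.val hp.symm, congrArg Subtype.val hq.symm⟩

end IsFreeGroup

theorem freeGroup_powers_of_common_element_general {α : Type*}
    (a s : FreeGroup α) (k r : ℤ) (hk : 1 ≤ k)
    (h : a ^ k = s ^ r) :
    ∃ (c : FreeGroup α) (p q : ℤ), a = c ^ p ∧ s = c ^ q :=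
  IsFreeGroup.exists_zpow_eq_and_zpow_eq_of_zpow_eq_zpow (by omega) h

/-- In a free group, if `a ^ k = s ^ r` for some integers `k, r ≥ 1`, then
`a` and `s` are powers of a common element. -/
theorem freeGroup_powers_of_common_element {α : Type*}
    (a s : FreeGroup α) (k r : ℤ) (hk : 1 ≤ k) (hr : 1 ≤ r)
    (h : a ^ k = s ^ r) :
    ∃ (c : FreeGroup α) (p q : ℤ), a = c ^ p ∧ s = c ^ q :=
  freeGroup_powers_of_common_element_general a s k r hk h
end
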